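/- If E ⊆ ℝ^d is weakly porous, then E has Lebesgue measure zero. -/

import Mathlib

open MeasureTheory Metric

/-- A half-open axis-parallel cube in `ℝ^d`: `[a₁, a₁+l) × ⋯ × [a_d, a_d+l)`. -/
structure Cube (d : ℕ) where
  a : Fin d → ℝ
  l : ℝ
  l_pos : 0 < l

/-- The underlying point set of a cube. -/
def Cube.set {d : ℕ} (Q : Cube d) : Set (EuclideanSpace ℝ (Fin d)) :=
  {x | ∀ i, Q.a i ≤ x i ∧ x i < Q.a i + Q.l}

/-- `Q` is a dyadic subcube of `R`: a member of `𝒟_j(R)` for some `j ≥ 0`. -/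
def IsDyadicSubcube {d : ℕ} (R Q : Cube d) : Prop :=
  ∃ j : ℕ, ∃ k : Fin d → ℕ, (∀ i, k i < 2 ^ j) ∧ Q.l = R.l / 2 ^ j ∧
    ∀ i, Q.a i = R.a i + (k i : ℝ) * (R.l / 2 ^ j)

/-- `Q' ∈ ℱ(R,E)`: a maximal dyadic subcube of `R` avoiding `E`, i.e.
`Q' ∩ E = ∅` and its dyadic parent `πQ'` meets `E`. -/
def IsMaxEmpty {d : ℕ} (R : Cube d) (E : Set (EuclideanSpace ℝ (Fin d))) (Q' : Cube d) : Prop :=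
  IsDyadicSubcube R Q' ∧ Q'.set ∩ E = ∅ ∧
    ∃ P : Cube d, IsDyadicSubcube R P ∧ P.l = 2 * Q'.l ∧ Q'.set ⊆ P.set ∧ (P.set ∩ E).Nonempty

/-- `M = M(R)`: a largest dyadic subcube of `R` containing no point of `E`. -/
def IsLargestEmptyDyadic {d : ℕ} (R : Cube d) (E : Set (EuclideanSpace ℝ (Fin d)))
    (M : Cube d) : Prop :=
  IsDyadicSubcube R M ∧ M.set ∩ E = ∅ ∧
    ∀ Q : Cube d, IsDyadicSubcube R Q → Q.set ∩ E = ∅ → Q.l ≤ M.l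

/-- Weak porosity of `E ⊆ ℝ^d`. -/
def WeaklyPorous {d : ℕ} (E : Set (EuclideanSpace ℝ (Fin d))) : Prop :=
  ∃ c δ : ℝ, 0 < c ∧ c < 1 ∧ 0 < δ ∧ δ < 1 ∧
    ∀ R : Cube d, ∃ M : Cube d, IsLargestEmptyDyadic R E M ∧
      ∃ F : Finset (Cube d),
        (↑F : Set (Cube d)).Pairwise (fun Q Q' => Disjoint Q.set Q'.set) ∧
        (∀ Q ∈ F, IsDyadicSubcube R Q ∧ Q.set ∩ E = ∅ ∧
          ENNReal.ofReal δ * volume M.set ≤ volume Q.set) ∧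
        ENNReal.ofReal c * volume R.set ≤ ∑ Q ∈ F, volume Q.set

/-! Every cube `R` contains disjoint `E`-free dyadic subcubes of total volume at least `c |R|`.
A closed ball of radius `r` contains the centred cube of side `2r / (√d + 1)`, a fixed fraction of
the ball's volume, so the relative measure of `E` in every ball is at most some `κ < 1`. By the
Lebesgue density theorem this relative measure tends to `1` at almost every point of `E`, so
`E` is null. -/

open Filter Set
open scoped ENNReal Topology

theorem measure_eq_zero_of_forall_measure_inter_closedBall_le {α : Type*} [MetricSpace α]
    [MeasurableSpace α] [BorelSpace α] [SecondCountableTopology α] [HasBesicovitchCovering α]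
    (μ : Measure α) [IsLocallyFiniteMeasure μ] {s : Set α} {κ : ℝ≥0∞} (hκ : κ < 1)
    (h : ∀ x, ∀ r > 0, μ (s ∩ closedBall x r) ≤ κ * μ (closedBall x r)) :
    μ s = 0 := by
  have hfalse : ∀ᵐ x ∂μ.restrict s, False := by
    filter_upwards [Besicovitch.ae_tendsto_measure_inter_div μ s] with x hx
    have hle : ∀ᶠ r in 𝓝[>] (0 : ℝ), μ (s ∩ closedBall x r) / μ (closedBall x r) ≤ κ :=
      eventually_nhdsWithin_of_forall fun r hr => ENNReal.div_le_of_le_mul (h x r hr)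
    obtain ⟨r, hrκ, hκr⟩ := (hle.and (hx.eventually (eventually_gt_nhds hκ))).exists
    exact (hrκ.trans_lt hκr).false
  exact Measure.restrict_eq_zero.1 (ae_eq_bot.1 (eventually_false_iff_eq_bot.1 hfalse))

theorem measure_inter_add_le_of_disjoint {α : Type*} [MeasurableSpace α] (μ : Measure α)
    {s t u : Set α} (hu : MeasurableSet u) (hut : u ⊆ t) (hsu : Disjoint s u) :
    μ (s ∩ t) + μ u ≤ μ t := by
  rw [← measure_union (hsu.mono_left inter_subset_left) hu]
  exact measure_mono (union_subset inter_subset_right hut)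

theorem EuclideanSpace.dist_le_sqrt_card_mul {d : ℕ} {x y : EuclideanSpace ℝ (Fin d)} {t : ℝ}
    (ht : 0 ≤ t) (h : ∀ i, |y i - x i| ≤ t) : dist y x ≤ √d * t := by
  have hsum : ∑ i, dist (y i) (x i) ^ 2 ≤ d * t ^ 2 := by
    simpa using Finset.sum_le_card_nsmul Finset.univ _ (t ^ 2) fun i _ =>
      pow_le_pow_left₀ dist_nonneg ((Real.dist_eq _ _).trans_le (h i)) 2
  calc dist y x = √(∑ i, dist (y i) (x i) ^ 2) := EuclideanSpace.dist_eq y x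
    _ ≤ √(d * t ^ 2) := Real.sqrt_le_sqrt hsum
    _ = √d * t := by rw [Real.sqrt_mul d.cast_nonneg, Real.sqrt_sq ht]

namespace Cube

variable {d : ℕ}

theorem set_eq_preimage_pi (Q : Cube d) :
    Q.set = (MeasurableEquiv.toLp 2 (Fin d → ℝ)).symm ⁻¹'
      univ.pi fun i => Ico (Q.a i) (Q.a i + Q.l) := by
  ext x
  simp [Cube.set, Set.mem_pi]

theorem measurableSet_set (Q : Cube d) : MeasurableSet Q.set := by
  rw [set_eq_preimage_pi]
  exact (MeasurableSet.univ_pi fun _ => measurableSet_Ico).preimage (by fun_prop)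

theorem volume_set (Q : Cube d) : volume Q.set = ENNReal.ofReal (Q.l ^ d) := by
  rw [set_eq_preimage_pi, (EuclideanSpace.volume_preserving_symm_measurableEquiv_toLp
    (Fin d)).measure_preimage (MeasurableSet.univ_pi fun _ => measurableSet_Ico).nullMeasurableSet,
    volume_pi_pi]
  simp [Real.volume_Ico, ENNReal.ofReal_pow Q.l_pos.le]

def centered (x : EuclideanSpace ℝ (Fin d)) {t : ℝ} (ht : 0 < t) : Cube d :=
  ⟨fun i => x i - t, 2 * t, by positivity⟩

theorem centered_set_subset_closedBall (x : EuclideanSpace ℝ (Fin d)) {t : ℝ} (ht : 0 < t) :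
    (centered x ht).set ⊆ closedBall x (√d * t) := by
  intro y hy
  refine EuclideanSpace.dist_le_sqrt_card_mul ht.le fun i => abs_le.2 ⟨?_, ?_⟩ <;>
    · obtain ⟨hlo, hhi⟩ := hy i
      dsimp only [centered] at hlo hhi
      linarith

end Cube

section

variable {d : ℕ}

theorem IsDyadicSubcube.set_subset {R Q : Cube d} (h : IsDyadicSubcube R Q) : Q.set ⊆ R.set := by
  obtain ⟨j, k, hk, hl, ha⟩ := h
  intro x hx i
  obtain ⟨hlo, hhi⟩ := hx i
  have hs : 0 ≤ R.l / 2 ^ j := div_nonneg R.l_pos.le (by positivity)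
  have hki : ((k i : ℝ) + 1) * (R.l / 2 ^ j) ≤ R.l := calc
    ((k i : ℝ) + 1) * (R.l / 2 ^ j) ≤ 2 ^ j * (R.l / 2 ^ j) := by
      gcongr
      exact_mod_cast hk i
    _ = R.l := mul_div_cancel₀ _ (by positivity)
  rw [ha i] at hlo hhi
  rw [hl] at hhi
  constructor <;> nlinarith [(k i).cast_nonneg (α := ℝ)]

theorem WeaklyPorous.exists_volume_inter_add_le {E : Set (EuclideanSpace ℝ (Fin d))}
    (h : WeaklyPorous E) :
    ∃ c : ℝ≥0∞, c ≠ 0 ∧ ∀ (R : Cube d) {S : Set (EuclideanSpace ℝ (Fin d))}, R.set ⊆ S →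
      volume (E ∩ S) + c * volume R.set ≤ volume S := by
  obtain ⟨c, _, hc, -, -, -, hE⟩ := h
  refine ⟨ENNReal.ofReal c, (ENNReal.ofReal_pos.2 hc).ne', fun R S hRS => ?_⟩
  obtain ⟨_, -, F, hdisj, hF, hcF⟩ := hE R
  set U := ⋃ Q ∈ F, Q.set
  have hU : MeasurableSet U := F.measurableSet_biUnion fun Q _ => Q.measurableSet_set
  have hvolU : volume U = ∑ Q ∈ F, volume Q.set :=
    measure_biUnion_finset hdisj fun Q _ => Q.measurableSet_set
  have hUS : U ⊆ S := iUnion₂_subset fun Q hQ => (hF Q hQ).1.set_subset.trans hRS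
  have hEU : Disjoint E U := disjoint_iUnion₂_right.2 fun Q hQ =>
    disjoint_iff_inter_eq_empty.2 <| by rw [inter_comm]; exact (hF Q hQ).2.1
  calc volume (E ∩ S) + ENNReal.ofReal c * volume R.set ≤ volume (E ∩ S) + volume U := by
        rw [hvolU]; gcongr
    _ ≤ volume S := measure_inter_add_le_of_disjoint volume hU hUS hEU

theorem WeaklyPorous.exists_volume_inter_closedBall_le {E : Set (EuclideanSpace ℝ (Fin d))}
    (h : WeaklyPorous E) :
    ∃ κ < 1, ∀ x, ∀ r > 0, volume (E ∩ closedBall x r) ≤ κ * volume (closedBall x r) := by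
  obtain ⟨c, hc, hhole⟩ := h.exists_volume_inter_add_le
  set V := volume (ball (0 : EuclideanSpace ℝ (Fin d)) 1)
  -- the cube below has volume `α * r ^ d`, the ball `closedBall x r` has volume `r ^ d * V`
  set α := ENNReal.ofReal ((2 / (√d + 1)) ^ d)
  have hV : V ≠ 0 := (measure_ball_pos _ _ one_pos).ne'
  have hV' : V ≠ ∞ := measure_ball_lt_top.ne
  have hα : α ≠ 0 := (ENNReal.ofReal_pos.2 (by positivity)).ne'
  refine ⟨1 - c * α / V, ENNReal.sub_lt_self ENNReal.one_ne_top one_ne_zero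
    (ENNReal.div_ne_zero.2 ⟨mul_ne_zero hc hα, hV'⟩), fun x r hr => ?_⟩
  have ht : 0 < r / (√d + 1) := by positivity
  have hsub : (Cube.centered x ht).set ⊆ closedBall x r := by
    refine (Cube.centered_set_subset_closedBall x ht).trans (closedBall_subset_closedBall ?_)
    rw [mul_div_assoc', div_le_iff₀ (by positivity)]
    nlinarith
  have hball : volume (closedBall x r) = ENNReal.ofReal (r ^ d) * V := by
    rw [Measure.addHaar_closedBall _ _ hr.le, finrank_euclideanSpace_fin]
  have hcube : volume (Cube.centered x ht).set = α * ENNReal.ofReal (r ^ d) := by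
    rw [Cube.volume_set, ← ENNReal.ofReal_mul (by positivity), ← mul_pow]
    congr 2
    simp only [Cube.centered]
    ring
  have hscale : c * α / V * volume (closedBall x r) = c * volume (Cube.centered x ht).set := by
    rw [hball, hcube, mul_comm _ V, ← mul_assoc, ENNReal.div_mul_cancel hV hV', mul_assoc]
  have hfin : c * volume (Cube.centered x ht).set ≠ ∞ :=
    ne_top_of_le_ne_top measure_closedBall_lt_top.ne (le_add_self.trans (hhole _ hsub))
  rw [ENNReal.sub_mul fun _ _ => measure_closedBall_lt_top.ne, one_mul, hscale]
  exact ENNReal.le_sub_of_add_le_right hfin (hhole _ hsub)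

end

/-- a weakly porous set has Lebesgue measure zero. -/
theorem stmt11 {d : ℕ} (E : Set (EuclideanSpace ℝ (Fin d))) (h : WeaklyPorous E) :
    volume E = 0 := by
  obtain ⟨κ, hκ, hE⟩ := h.exists_volume_inter_closedBall_le
  exact measure_eq_zero_of_forall_measure_inter_closedBall_le volume hκ hE
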